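/- The quaternion algebra ℍ over ℝ, with grading ℍ^{(0,0,0)} = ℝ·1, ℍ^{(0,1,1)} = ℝ·i, ℍ^{(1,0,1)} = ℝ·j, ℍ^{(1,1,0)} = ℝ·k (all other components zero), is a ((ℤ/2)³, λ)-commutative algebra for the commutation factor λ(x,y) = (−1)^{x₁y₁+x₂y₂+x₃y₃}. That is, for homogeneous quaternions a, b of degrees ã, b̃, one has ab = λ(ã,b̃) ba. -/

import Mathlib

open Quaternion

/-- Degree of i in (ℤ/2)³. -/
def degI : Fin 3 → ZMod 2 := ![0, 1, 1]
/-- Degree of j in (ℤ/2)³. -/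
def degJ : Fin 3 → ZMod 2 := ![1, 0, 1]
/-- Degree of k in (ℤ/2)³. -/
def degK : Fin 3 → ZMod 2 := ![1, 1, 0]

/-- The commutation factor λ(x,y) = (−1)^{x₁y₁+x₂y₂+x₃y₃} on (ℤ/2)³, valued in ℝ. -/
def lamH (x y : Fin 3 → ZMod 2) : ℝ :=
  (-1) ^ (x 0 * y 0 + x 1 * y 1 + x 2 * y 2).val

/-- `qHomog γ a` : a is a homogeneous quaternion of degree γ for the grading
ℍ⁰ = ℝ·1, ℍ^ĩ = ℝ·i, ℍ^j̃ = ℝ·j, ℍ^k̃ = ℝ·k (other components zero). -/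
def qHomog (γ : Fin 3 → ZMod 2) (a : ℍ[ℝ]) : Prop :=
  (γ = 0 ∧ ∃ r : ℝ, a = ⟨r, 0, 0, 0⟩) ∨
  (γ = degI ∧ ∃ r : ℝ, a = ⟨0, r, 0, 0⟩) ∨
  (γ = degJ ∧ ∃ r : ℝ, a = ⟨0, 0, r, 0⟩) ∨
  (γ = degK ∧ ∃ r : ℝ, a = ⟨0, 0, 0, r⟩)

/-!
Every homogeneous quaternion is a real multiple of one of `1, i, j, k`, and real scalars factor
out of both sides of `ab = λ(ã, b̃) ba`, so only the sixteen products of these units need checking.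
The unit `1` is central and `λ(0, ·) = 1`; each of `i, j, k` commutes with itself and its degree has
even weight, so `λ(x, x) = 1`; two distinct units among `i, j, k` anticommute, and the degrees of
any two of them share exactly one nonzero coordinate, so `λ = -1`.
-/

theorem smul_mul_smul_eq_of_mul_eq {R A : Type*} [CommSemiring R] [Semiring A] [Algebra R A]
    {a b : A} {c : R} (h : a * b = c • (b * a)) (r s : R) :
    (r • a) * (s • b) = c • ((s • b) * (r • a)) := by
  rw [smul_mul_smul_comm, smul_mul_smul_comm, h, smul_comm, mul_comm s]

namespace QuaternionAlgebra.Basis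

section Anticommute

variable {R A : Type*} [CommRing R] [Ring A] [Algebra R A] {c₁ c₃ : R} (q : Basis A c₁ 0 c₃)

theorem j_mul_i_eq_neg : q.j * q.i = -(q.i * q.j) := by simp

theorem k_mul_i_eq_neg : q.k * q.i = -(q.i * q.k) := by simp [neg_smul]

theorem k_mul_j_eq_neg : q.k * q.j = -(q.j * q.k) := by simp

end Anticommute

variable {A : Type*} [Ring A] [Algebra ℝ A] {c₁ c₃ : ℝ} (q : Basis A c₁ 0 c₃)

def gradedBasis : List ((Fin 3 → ZMod 2) × A) :=
  [(0, 1), (degI, q.i), (degJ, q.j), (degK, q.k)]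

theorem mul_eq_lamH_smul_mul_of_mem_gradedBasis :
    ∀ e ∈ q.gradedBasis, ∀ f ∈ q.gradedBasis, e.2 * f.2 = lamH e.1 f.1 • (f.2 * e.2) := by
  simp only [gradedBasis, List.mem_cons, List.not_mem_nil, or_false, forall_eq_or_imp, forall_eq]
  simp only [lamH, degI, degJ, degK, Pi.zero_apply, Matrix.cons_val, mul_zero, mul_one, add_zero,
    zero_add, show (1 + 1 : ZMod 2) = 0 from rfl, ZMod.val_one, ZMod.val_zero, pow_zero, pow_one,
    one_smul, neg_one_smul, j_mul_i_eq_neg, k_mul_i_eq_neg, k_mul_j_eq_neg, neg_neg, one_mul,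
    and_self]

end QuaternionAlgebra.Basis

theorem qHomog.exists_mem_gradedBasis {x : Fin 3 → ZMod 2} {a : ℍ[ℝ]} (h : qHomog x a) :
    ∃ e ∈ (QuaternionAlgebra.Basis.self ℝ :
        QuaternionAlgebra.Basis ℍ[ℝ] (-1 : ℝ) 0 (-1)).gradedBasis,
      x = e.1 ∧ ∃ r : ℝ, a = r • e.2 := by
  simp only [QuaternionAlgebra.Basis.gradedBasis, List.mem_cons, List.not_mem_nil, or_false,
    exists_eq_or_imp, exists_eq_left]
  rcases h with ⟨rfl, r, rfl⟩ | ⟨rfl, r, rfl⟩ | ⟨rfl, r, rfl⟩ | ⟨rfl, r, rfl⟩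
  · exact .inl ⟨rfl, r, by ext <;> simp⟩
  · exact .inr <| .inl ⟨rfl, r, by ext <;> simp [QuaternionAlgebra.Basis.self]⟩
  · exact .inr <| .inr <| .inl ⟨rfl, r, by ext <;> simp [QuaternionAlgebra.Basis.self]⟩
  · exact .inr <| .inr <| .inr ⟨rfl, r, by ext <;> simp [QuaternionAlgebra.Basis.self]⟩

/-- The quaternion algebra ℍ over ℝ, graded by (ℤ/2)³ with
deg i = (0,1,1), deg j = (1,0,1), deg k = (1,1,0), is ((ℤ/2)³,λ)-commutative
for λ(x,y) = (−1)^{x₁y₁+x₂y₂+x₃y₃}: for homogeneous quaternions a, b of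
degrees ã, b̃ one has ab = λ(ã,b̃)·ba. -/
theorem quaternion_graded_commutative
    (x y : Fin 3 → ZMod 2) (a b : ℍ[ℝ])
    (ha : qHomog x a) (hb : qHomog y b) :
    a * b = lamH x y • (b * a) := by
  obtain ⟨e, he, rfl, r, rfl⟩ := ha.exists_mem_gradedBasis
  obtain ⟨f, hf, rfl, s, rfl⟩ := hb.exists_mem_gradedBasis
  exact smul_mul_smul_eq_of_mul_eq
    (QuaternionAlgebra.Basis.mul_eq_lamH_smul_mul_of_mem_gradedBasis _ e he f hf) r s
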